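/- In the limit L → -∞ the long-run return formula μ(f,D,U|L) = (1/(πθ))·( ln(1 + f(e^{U-D-c}-1))/Erfid(u,d) + ln(1 + f(e^{L-D-c}-1))/Erfid(d,l) ) converges, for fixed f ∈ (0,1], D < U, c < U - D, to μ_B(f,D,U) = ln(1 + f(e^{U-D-c}-1))/(πθ·Erfid(u,d)); in particular for f = 1, μ_B = (U-D-c)/(πθ·Erfid(u,d)). -/

import Mathlib

open Real intervalIntegral Filter

noncomputable def Erfi (x : ℝ) : ℝ := (2 / Real.sqrt π) * ∫ t in (0 : ℝ)..x, Real.exp (t ^ 2)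

noncomputable def Erfid (x y : ℝ) : ℝ := Erfi (x / Real.sqrt 2) - Erfi (y / Real.sqrt 2)

/-!
For `0 < f ≤ 1` and `x ≤ 0` the argument `1 + f (eˣ - 1)` lies in `[f eˣ, 1]`, so the stop-loss
numerator `log (1 + f (e^{L-D-c} - 1))` is `O(L)` as `L → -∞`. Since `exp (t²) ≥ t²`, `Erfi y` is
at most `y³` times a positive constant for `y ≤ 0`, so the denominator `Erfid d (L / Σ)` grows
faster than `|L|`. Hence the stop-loss term tends to `0`, and for `f = 1` the remaining numerator
is `log (e^{U-D-c}) = U - D - c`.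
-/

open Asymptotics

theorem erfi_le_of_nonpos {y : ℝ} (hy : y ≤ 0) : Erfi y ≤ 2 / √π * (y ^ 3 / 3) := by
  have h_cube : ∫ t in (0 : ℝ)..y, t ^ 2 = y ^ 3 / 3 := by
    norm_num [integral_pow]
  have h_int : ∫ t in (0 : ℝ)..y, exp (t ^ 2) ≤ ∫ t in (0 : ℝ)..y, t ^ 2 := by
    rw [integral_symm, integral_symm y]
    refine neg_le_neg (integral_mono_on hy ((continuous_pow 2).intervalIntegrable _ _)
      ((continuous_exp.comp (continuous_pow 2)).intervalIntegrable _ _) fun t _ => ?_)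
    linarith [add_one_le_exp (t ^ 2)]
  rw [Erfi, ← h_cube]
  gcongr

theorem tendsto_erfi_div_self_atBot : Tendsto (fun y => Erfi y / y) atBot atTop := by
  refine tendsto_atTop_mono' _ ?_
    ((tendsto_id.atBot_mul_atBot₀ tendsto_id).const_mul_atTop (by positivity : 0 < 2 / √π / 3))
  filter_upwards [eventually_lt_atBot 0] with y hy
  calc 2 / √π / 3 * (id y * id y) = 2 / √π * (y ^ 3 / 3) / y := by
        unfold id
        field_simp
    _ ≤ Erfi y / y := div_le_div_of_nonpos_of_le hy.le (erfi_le_of_nonpos hy.le)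

theorem isLittleO_id_erfi_atBot : (fun y : ℝ => y) =o[atBot] Erfi :=
  .of_tendsto_div_atTop tendsto_erfi_div_self_atBot

theorem isLittleO_id_erfid_atBot (x : ℝ) {a : ℝ} (ha : 0 < a) :
    (fun y : ℝ => y) =o[atBot] fun y => Erfid x (y / a) := by
  set s := a * √2
  have hs : 0 < s := by positivity
  have h_tendsto : Tendsto (fun y : ℝ => y / s) atBot atBot := tendsto_id.atBot_div_const hs
  have h_erfi : (fun y : ℝ => y / s) =o[atBot] fun y => Erfi (y / s) :=
    isLittleO_id_erfi_atBot.comp_tendsto h_tendsto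
  have h_const : (fun _ : ℝ => Erfi (x / √2)) =o[atBot] fun y => -Erfi (y / s) :=
    (((isLittleO_const_id_atBot _).comp_tendsto h_tendsto).trans h_erfi).neg_right
  have h_id : (fun y : ℝ => y) =o[atBot] fun y => -Erfi (y / s) :=
    ((h_erfi.const_mul_left s).neg_right).congr_left fun y => by field_simp
  refine (h_id.trans_isBigO h_const.right_isBigO_add).congr_right fun y => ?_
  rw [Erfid, div_div, sub_eq_add_neg]

theorem abs_log_one_add_mul_exp_sub_one_le {f x : ℝ} (hf : 0 < f) (hf1 : f ≤ 1) (hx : x ≤ 0) :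
    |log (1 + f * (exp x - 1))| ≤ -log f - x := by
  have h_le_one : 1 + f * (exp x - 1) ≤ 1 := by
    nlinarith [exp_le_one_iff.mpr hx]
  have h_ge : f * exp x ≤ 1 + f * (exp x - 1) := by nlinarith
  have h_pos : 0 < f * exp x := mul_pos hf (exp_pos x)
  have h_log_ge : log f + x ≤ log (1 + f * (exp x - 1)) := by
    simpa [log_mul hf.ne' (exp_ne_zero x)] using log_le_log h_pos h_ge
  rw [abs_of_nonpos (log_nonpos (h_pos.trans_le h_ge).le h_le_one)]
  linarith

theorem isBigO_log_one_add_mul_exp_sub_one_atBot {f : ℝ} (hf : 0 < f) (hf1 : f ≤ 1) (b : ℝ) :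
    (fun y => log (1 + f * (exp (y - b) - 1))) =O[atBot] fun y => y := by
  have h_bound : (fun x => log (1 + f * (exp x - 1))) =O[atBot] fun x => x := by
    refine .of_bound 2 ?_
    filter_upwards [eventually_le_atBot (log f)] with x hx
    have hf_log : log f ≤ 0 := log_nonpos hf.le hf1
    rw [norm_eq_abs, norm_eq_abs, abs_of_nonpos (hx.trans hf_log)]
    linarith [abs_log_one_add_mul_exp_sub_one_le hf hf1 (hx.trans hf_log)]
  have h_shift : (fun y : ℝ => y - b) =O[atBot] fun y => y :=
    (isBigO_refl _ _).sub (isLittleO_const_id_atBot b).isBigO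
  exact (h_bound.comp_tendsto (tendsto_atBot_add_const_right _ (-b) tendsto_id)).trans h_shift

theorem bertram_limit_general (θ Sig f D U c : ℝ) (hSig : 0 < Sig) (hf : 0 < f) (hf1 : f ≤ 1)
    (u d : ℝ) :
    Tendsto (fun L : ℝ =>
        (1 / (π * θ)) *
          (Real.log (1 + f * (Real.exp (U - D - c) - 1)) / Erfid u d
            + Real.log (1 + f * (Real.exp (L - D - c) - 1)) / Erfid d (L / Sig)))
      atBot
      (nhds (Real.log (1 + f * (Real.exp (U - D - c) - 1)) / (π * θ * Erfid u d))) ∧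
    (f = 1 →
      Real.log (1 + f * (Real.exp (U - D - c) - 1)) / (π * θ * Erfid u d)
        = (U - D - c) / (π * θ * Erfid u d)) := by
  constructor
  · have h_stop_loss : Tendsto (fun L => log (1 + f * (exp (L - D - c) - 1)) / Erfid d (L / Sig))
        atBot (nhds 0) := by
      have h := ((isBigO_log_one_add_mul_exp_sub_one_atBot hf hf1 (D + c)).trans_isLittleO
        (isLittleO_id_erfid_atBot d hSig)).tendsto_div_nhds_zero
      simpa only [sub_add_eq_sub_sub] using h
    convert (tendsto_const_nhds.add h_stop_loss).const_mul (1 / (π * θ)) using 2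
    rw [add_zero, div_mul_div_comm, one_mul]
  · rintro rfl
    rw [one_mul, add_sub_cancel, log_exp]

/-- As the stop-loss `L → -∞`, the long-run return converges to Bertram's long-run return;
for `f = 1` the latter equals `(U-D-c)/(πθ·Erfid(u,d))`. -/
theorem bertram_limit (θ Sig f D U c : ℝ) (hθ : 0 < θ) (hSig : 0 < Sig)
    (hDU : D < U) (hf : 0 < f) (hf1 : f ≤ 1) (hc : 0 < c) (hcU : c < U - D)
    (u d : ℝ) (hu : u = U / Sig) (hd : d = D / Sig) :
    Tendsto (fun L : ℝ =>
        (1 / (π * θ)) *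
          (Real.log (1 + f * (Real.exp (U - D - c) - 1)) / Erfid u d
            + Real.log (1 + f * (Real.exp (L - D - c) - 1)) / Erfid d (L / Sig)))
      atBot
      (nhds (Real.log (1 + f * (Real.exp (U - D - c) - 1)) / (π * θ * Erfid u d))) ∧
    (f = 1 →
      Real.log (1 + f * (Real.exp (U - D - c) - 1)) / (π * θ * Erfid u d)
        = (U - D - c) / (π * θ * Erfid u d)) :=
  bertram_limit_general θ Sig f D U c hSig hf hf1 u d
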